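/- arXiv:math/0609625 — 3 statements merged into one kernel-verified Lean document; each statement's English description precedes it below -/
import Mathlib

section
/- If F is a distribution function on ℝ with density f such that lim_{x→∞} x·f(x)/(1−F(x)) = α > 0, then 1−F is regularly varying at infinity with index −α; i.e., for every λ > 0, lim_{x→∞} (1−F(λx))/(1−F(x)) = λ^{−α}. -/
/-! In logarithmic coordinates `φ u = log (G (exp u))` with `G = 1 - F`, the von Mises condition
says `φ' → -α`. By the mean value inequality the increments `φ (u + h) - φ u` then tend to `-α h`,
and exponentiating with `h = log l` gives `G (l x) / G x → l ^ (-α)`. -/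

open Filter Real Topology

theorem tendsto_sub_comp_add_of_tendsto_deriv {φ φ' : ℝ → ℝ} {c : ℝ}
    (hφ : ∀ u, HasDerivAt φ (φ' u) u) (hφ' : Tendsto φ' atTop (𝓝 c)) (h : ℝ) :
    Tendsto (fun u => φ (u + h) - φ u) atTop (𝓝 (c * h)) := by
  rw [Metric.tendsto_atTop]
  intro ε hε
  have hδ : 0 < ε / (|h| + 1) := by positivity
  obtain ⟨T, hT⟩ := Metric.tendsto_atTop.mp hφ' _ hδ
  refine ⟨max T (T - h), fun u hu => ?_⟩
  have huT : u ∈ Set.Ici T := le_of_max_le_left hu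
  have huhT : u + h ∈ Set.Ici T := by
    simp only [Set.mem_Ici]; linarith [le_of_max_le_right hu]
  have hmvt := (convex_Ici T).norm_image_sub_le_of_norm_hasDerivWithin_le
    (f := fun t => φ t - t * c) (fun t _ => ((hφ t).sub (hasDerivAt_mul_const c)).hasDerivWithinAt)
    (fun t ht => (hT t ht).le) huT huhT
  rw [Real.dist_eq]
  calc |φ (u + h) - φ u - c * h| = ‖(φ (u + h) - (u + h) * c) - (φ u - u * c)‖ := by
        rw [Real.norm_eq_abs]; ring_nf
    _ ≤ ε / (|h| + 1) * |h| := by simpa using hmvt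
    _ < ε := by
        rw [div_mul_eq_mul_div, div_lt_iff₀ (by positivity)]
        nlinarith

theorem tendsto_div_comp_mul_of_tendsto_elasticity {G G' : ℝ → ℝ} {ρ : ℝ}
    (hG : ∀ x, HasDerivAt G (G' x) x) (hG_pos : ∀ x, 0 < G x)
    (hρ : Tendsto (fun x => x * G' x / G x) atTop (𝓝 ρ)) {l : ℝ} (hl : 0 < l) :
    Tendsto (fun x => G (l * x) / G x) atTop (𝓝 (l ^ ρ)) := by
  set φ : ℝ → ℝ := fun u => log (G (exp u))
  have hφ : ∀ u, HasDerivAt φ (exp u * G' (exp u) / G (exp u)) u := fun u => by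
    have := ((hG (exp u)).comp u (hasDerivAt_exp u)).log (hG_pos (exp u)).ne'
    simpa only [Function.comp_def, mul_comm] using this
  have hincr : Tendsto (fun x => φ (log x + log l) - φ (log x)) atTop (𝓝 (ρ * log l)) :=
    (tendsto_sub_comp_add_of_tendsto_deriv hφ (hρ.comp tendsto_exp_atTop) (log l)).comp
      tendsto_log_atTop
  rw [rpow_def_of_pos hl, mul_comm]
  refine ((continuous_exp.tendsto _).comp hincr).congr' ?_
  filter_upwards [eventually_gt_atTop 0] with x hx
  simp only [Function.comp_apply, φ, exp_sub, exp_add, exp_log (hG_pos _), exp_log hx,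
    exp_log hl, mul_comm x l]

theorem vonMises_implies_regularly_varying_general
    (F f : ℝ → ℝ) (α : ℝ)
    (hderiv : ∀ x, HasDerivAt F (f x) x)
    (hF_lt_one : ∀ x, F x < 1)
    (hvm : Tendsto (fun x => x * f x / (1 - F x)) atTop (nhds α)) :
    ∀ l : ℝ, 0 < l →
      Tendsto (fun x => (1 - F (l * x)) / (1 - F x)) atTop (nhds (l ^ (-α))) := by
  intro l hl
  refine tendsto_div_comp_mul_of_tendsto_elasticity (fun x => (hderiv x).const_sub 1)
    (fun x => sub_pos.mpr (hF_lt_one x)) ?_ hl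
  simpa only [mul_neg, neg_div] using hvm.neg

/-- Von Mises condition implies `1 - F` is regularly varying at infinity
with index `-α`. -/
theorem vonMises_implies_regularly_varying
    (F f : ℝ → ℝ) (α : ℝ) (hα : 0 < α)
    (hderiv : ∀ x, HasDerivAt F (f x) x)
    (hf_nonneg : ∀ x, 0 ≤ f x)
    (hF_lt_one : ∀ x, F x < 1)
    (hvm : Tendsto (fun x => x * f x / (1 - F x)) atTop (nhds α)) :
    ∀ l : ℝ, 0 < l →
      Tendsto (fun x => (1 - F (l * x)) / (1 - F x)) atTop (nhds (l ^ (-α))) :=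
  vonMises_implies_regularly_varying_general F f α hderiv hF_lt_one hvm
end

section
/- For a nonnegative random variable Y with E[Y^{1/μ + δ}] < ∞ for some μ > 0 and δ > 0, and quantile function Q_Y, the integral ∫_{x_1}^{1} (y(1−y))^{μ} dQ_Y(y) is finite, where x_1 = inf{y : Q_Y(y) ≥ 0}. -/
open Set Real MeasureTheory

/-! Markov's inequality for `Y ^ p`, `p = 1/μ + δ`, gives the quantile bound
`Q_Y(y) ≤ A (1 - y) ^ (-1/p)`. Near `y = 1`, the layer-cake formula then bounds the integral of
`(1 - y) ^ μ` against `dQ_Y` by `∫₀^c A t ^ (-1/(μ p)) dt`, which is finite because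
`μ p = 1 + μ δ > 1`. On `[x₁, 1/2]` the weight is continuous and `dQ_Y` is locally finite. -/

theorem measureReal_lt_le_integral_rpow_div {Ω : Type*} [MeasurableSpace Ω] {P : Measure Ω}
    [IsFiniteMeasure P] {Y : Ω → ℝ} (hY : 0 ≤ᵐ[P] Y) {p b : ℝ} (hp : 0 ≤ p) (hb : 0 < b)
    (hmom : Integrable (fun ω => Y ω ^ p) P) :
    P.real {ω | b < Y ω} ≤ (∫ ω, Y ω ^ p ∂P) / b ^ p := by
  have hbp : 0 < b ^ p := rpow_pos_of_pos hb p
  have hsub : {ω | b < Y ω} ⊆ {ω | b ^ p ≤ Y ω ^ p} := fun ω hω =>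
    rpow_le_rpow hb.le (le_of_lt hω) hp
  rw [le_div_iff₀ hbp, mul_comm]
  exact (mul_le_mul_of_nonneg_left (measureReal_mono hsub) hbp.le).trans
    (mul_meas_ge_le_integral_of_nonneg (hY.mono fun ω h => rpow_nonneg h p) hmom _)

theorem exists_quantile_le_mul_one_sub_rpow_neg {Ω : Type*} [MeasurableSpace Ω] {P : Measure Ω}
    [IsProbabilityMeasure P] {Y : Ω → ℝ} (hY : 0 ≤ᵐ[P] Y) {p : ℝ} (hp : 0 < p)
    (hmom : Integrable (fun ω => Y ω ^ p) P) :
    ∃ A, ∀ y ∈ Ioo (0 : ℝ) 1,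
      sInf {x | y ≤ P.real {ω | Y ω ≤ x}} ≤ A * (1 - y) ^ (-p⁻¹) := by
  set M := ∫ ω, Y ω ^ p ∂P
  have hM : 0 ≤ M := integral_nonneg_of_ae (hY.mono fun ω h => rpow_nonneg h p)
  refine ⟨(M + 1) ^ p⁻¹, fun y ⟨hy0, hy1⟩ => ?_⟩
  have h1y : 0 < 1 - y := sub_pos.mpr hy1
  set b := (M + 1) ^ p⁻¹ * (1 - y) ^ (-p⁻¹)
  have hb : 0 < b := by positivity
  have hbp : b ^ p = (M + 1) / (1 - y) := by
    rw [mul_rpow (by positivity) (by positivity), rpow_inv_rpow (by positivity) hp.ne',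
      ← rpow_mul h1y.le, neg_mul, inv_mul_cancel₀ hp.ne', rpow_neg_one, div_eq_mul_inv]
  have htail : P.real {ω | b < Y ω} ≤ 1 - y := calc
    _ ≤ M / b ^ p := measureReal_lt_le_integral_rpow_div hY hp.le hb hmom
    _ = M / (M + 1) * (1 - y) := by rw [hbp]; field_simp
    _ ≤ 1 - y := mul_le_of_le_one_left h1y.le ((div_le_one (by positivity)).mpr (by linarith))
  have hyb : y ≤ P.real {ω | Y ω ≤ b} := by
    have hunion : {ω | Y ω ≤ b} ∪ {ω | b < Y ω} = univ := by ext ω; simp [le_or_gt]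
    have := measureReal_union_le (μ := P) {ω | Y ω ≤ b} {ω | b < Y ω}
    rw [hunion, probReal_univ] at this
    linarith
  refine csInf_le ⟨0, fun x hx => ?_⟩ hyb
  by_contra! hx0
  have hnull : P {ω | Y ω ≤ x} = 0 :=
    measure_mono_null (fun ω hω => not_le.mpr (lt_of_le_of_lt hω hx0)) (ae_iff.mp hY)
  have : y ≤ 0 := by simpa [Measure.real, hnull] using hx
  linarith

theorem StieltjesFunction.measure_setOf_lt_one_sub_rpow_inter_Ioo_le (F : StieltjesFunction ℝ)
    {a μ t : ℝ} (hμ : 0 < μ) (ht : 0 < t) :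
    F.measure ({y | t < (1 - y) ^ μ} ∩ Ioo a 1) ≤ ENNReal.ofReal (F (1 - t ^ μ⁻¹) - F a) := by
  rw [← F.measure_Ioc]
  refine measure_mono fun y ⟨hty, hya, hy1⟩ => ⟨hya, ?_⟩
  have h := rpow_lt_rpow ht.le hty (inv_pos.mpr hμ)
  rw [rpow_rpow_inv (sub_nonneg.mpr hy1.le) hμ.ne'] at h
  linarith

theorem StieltjesFunction.measure_setOf_lt_one_sub_rpow_inter_Ioo_le_indicator
    (F : StieltjesFunction ℝ) {a A β μ t : ℝ} (ha : a < 1) (hμ : 0 < μ) (ht : 0 < t)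
    (hF : ∀ y ∈ Ioo a 1, F y ≤ A * (1 - y) ^ (-β)) :
    F.measure ({y | t < (1 - y) ^ μ} ∩ Ioo a 1)
      ≤ (Ioo 0 ((1 - a) ^ μ)).indicator (fun t => ENNReal.ofReal (A * t ^ (-(β / μ)) - F a)) t := by
  refine (F.measure_setOf_lt_one_sub_rpow_inter_Ioo_le hμ ht).trans ?_
  have hcs : ((1 - a) ^ μ) ^ μ⁻¹ = 1 - a := rpow_rpow_inv (sub_nonneg.mpr ha.le) hμ.ne'
  rcases lt_or_ge t ((1 - a) ^ μ) with htc | htc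
  · rw [indicator_of_mem (show t ∈ Ioo 0 ((1 - a) ^ μ) from ⟨ht, htc⟩)]
    have hs : t ^ μ⁻¹ < 1 - a := hcs ▸ rpow_lt_rpow ht.le htc (inv_pos.mpr hμ)
    have hs0 : 0 < t ^ μ⁻¹ := rpow_pos_of_pos ht _
    refine ENNReal.ofReal_le_ofReal (sub_le_sub_right ?_ _)
    calc F (1 - t ^ μ⁻¹) ≤ A * (1 - (1 - t ^ μ⁻¹)) ^ (-β) := hF _ ⟨by linarith, by linarith⟩
      _ = A * t ^ (-(β / μ)) := by
        rw [sub_sub_cancel, ← rpow_mul ht.le, div_eq_inv_mul, neg_mul_eq_mul_neg]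
  · rw [indicator_of_notMem fun h => (not_lt.mpr htc) h.2, nonpos_iff_eq_zero,
      ENNReal.ofReal_eq_zero, sub_nonpos]
    have hs : 1 - a ≤ t ^ μ⁻¹ := hcs ▸ rpow_le_rpow (by positivity) htc (inv_nonneg.mpr hμ.le)
    exact F.mono (by linarith)

theorem StieltjesFunction.lintegral_Ioo_one_sub_rpow_lt_top (F : StieltjesFunction ℝ)
    {a A β μ : ℝ} (ha : a < 1) (hμ : 0 < μ) (hβ : β < μ)
    (hF : ∀ y ∈ Ioo a 1, F y ≤ A * (1 - y) ^ (-β)) :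
    ∫⁻ y in Ioo a 1, ENNReal.ofReal ((1 - y) ^ μ) ∂F.measure < ⊤ := by
  set c := (1 - a) ^ μ
  set g : ℝ → ℝ := fun t => A * t ^ (-(β / μ)) - F a
  have hg : IntegrableOn g (Ioo 0 c) :=
    (((intervalIntegral.integrableOn_Ioo_rpow_iff (rpow_pos_of_pos (sub_pos.mpr ha) μ)).mpr
      (by rw [neg_lt_neg_iff, div_lt_one hμ]; exact hβ)).const_mul A).sub
      (integrableOn_const (by simp))
  have hlevel : ∀ t ∈ Ioi (0 : ℝ), F.measure.restrict (Ioo a 1) {y | t < (1 - y) ^ μ}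
      ≤ (Ioo 0 c).indicator (fun t => ENNReal.ofReal (g t)) t := fun t ht => by
    rw [Measure.restrict_apply' measurableSet_Ioo]
    exact F.measure_setOf_lt_one_sub_rpow_inter_Ioo_le_indicator ha hμ ht hF
  rw [lintegral_eq_lintegral_meas_lt _
    ((ae_restrict_mem measurableSet_Ioo).mono fun y hy => rpow_nonneg (sub_nonneg.mpr hy.2.le) μ)
    (by fun_prop)]
  calc _ ≤ ∫⁻ t in Ioi 0, (Ioo 0 c).indicator (fun t => ENNReal.ofReal (g t)) t :=
        setLIntegral_mono' _root_.measurableSet_Ioi hlevel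
    _ ≤ ∫⁻ t, (Ioo 0 c).indicator (fun t => ENNReal.ofReal (g t)) t :=
        setLIntegral_le_lintegral _ _
    _ = ∫⁻ t in Ioo 0 c, ENNReal.ofReal (g t) := lintegral_indicator measurableSet_Ioo _
    _ < ⊤ := hg.lintegral_lt_top

theorem weighted_quantile_integral_finite_general
    {Ω : Type*} [MeasureSpace Ω] [IsProbabilityMeasure (volume : Measure Ω)]
    (Y : Ω → ℝ) (hYpos : ∀ ω, 0 ≤ Y ω)
    (μ δ : ℝ) (hμ : 0 < μ) (hδ : 0 < δ)
    (hmom : Integrable (fun ω => Y ω ^ (1 / μ + δ)))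
    (FY : ℝ → ℝ) (hFY : ∀ x, FY x = (volume {ω | Y ω ≤ x}).toReal)
    (QY : StieltjesFunction ℝ)
    (hQY : ∀ y ∈ Ioo (0 : ℝ) 1, QY y = sInf {x : ℝ | y ≤ FY x})
    (x₁ : ℝ) :
    (∫⁻ y in Ioo x₁ 1, ENNReal.ofReal ((y * (1 - y)) ^ μ) ∂QY.measure) < ⊤ := by
  set p := 1 / μ + δ
  have hp : 0 < p := by positivity
  have hpμ : p⁻¹ < μ := by
    rw [inv_lt_iff_one_lt_mul₀ hp, mul_add, one_div, mul_inv_cancel₀ hμ.ne']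
    linarith [mul_pos hμ hδ]
  obtain ⟨A, hA⟩ := exists_quantile_le_mul_one_sub_rpow_neg (ae_of_all _ hYpos) hp hmom
  have hQY_tail : ∀ y ∈ Ioo (1 / 2 : ℝ) 1, QY y ≤ A * (1 - y) ^ (-p⁻¹) := fun y hy => by
    have hy' : y ∈ Ioo (0 : ℝ) 1 := ⟨by linarith [hy.1], hy.2⟩
    rw [hQY y hy', funext hFY]
    exact hA y hy'
  have hlow : ∫⁻ y in Icc x₁ (1 / 2), ENNReal.ofReal ((y * (1 - y)) ^ μ) ∂QY.measure < ⊤ :=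
    ((continuous_id.mul (continuous_const.sub continuous_id)).rpow_const
      fun _ => Or.inr hμ.le).integrableOn_Icc.lintegral_lt_top
  have hhigh : ∫⁻ y in Ioo (1 / 2) 1, ENNReal.ofReal ((y * (1 - y)) ^ μ) ∂QY.measure
      ≤ ∫⁻ y in Ioo (1 / 2) 1, ENNReal.ofReal ((1 - y) ^ μ) ∂QY.measure :=
    setLIntegral_mono (by fun_prop) fun y ⟨hy0, hy1⟩ => ENNReal.ofReal_le_ofReal <|
      rpow_le_rpow (by nlinarith) (by nlinarith) hμ.le
  calc _ ≤ ∫⁻ y in Icc x₁ (1 / 2) ∪ Ioo (1 / 2) 1, ENNReal.ofReal ((y * (1 - y)) ^ μ) ∂QY.measure :=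
        lintegral_mono_set fun y hy =>
          (le_or_gt y (1 / 2)).imp (fun h => ⟨hy.1.le, h⟩) (fun h => ⟨h, hy.2⟩)
    _ ≤ _ + _ := lintegral_union_le _ _ _
    _ < ⊤ := ENNReal.add_lt_top.mpr ⟨hlow, hhigh.trans_lt
        (QY.lintegral_Ioo_one_sub_rpow_lt_top (by norm_num) hμ hpμ hQY_tail)⟩

/-- If `Y ≥ 0` has a finite moment of order `1/μ + δ`, then the weighted
Lebesgue–Stieltjes integral `∫_{x₁}^1 (y(1-y))^μ dQ_Y(y)` is finite, where
`Q_Y` is the quantile function of `Y` and `x₁ = inf{y : Q_Y(y) ≥ 0}`. -/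
theorem weighted_quantile_integral_finite
    {Ω : Type*} [MeasureSpace Ω] [IsProbabilityMeasure (volume : Measure Ω)]
    (Y : Ω → ℝ) (hYmeas : Measurable Y) (hYpos : ∀ ω, 0 ≤ Y ω)
    (μ δ : ℝ) (hμ : 0 < μ) (hδ : 0 < δ)
    (hmom : Integrable (fun ω => Y ω ^ (1 / μ + δ)))
    (FY : ℝ → ℝ) (hFY : ∀ x, FY x = (volume {ω | Y ω ≤ x}).toReal)
    (QY : StieltjesFunction ℝ)
    (hQY : ∀ y ∈ Ioo (0 : ℝ) 1, QY y = sInf {x : ℝ | y ≤ FY x})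
    (x₁ : ℝ) (hx₁ : x₁ = sInf {y : ℝ | 0 ≤ QY y}) :
    (∫⁻ y in Ioo x₁ 1, ENNReal.ofReal ((y * (1 - y)) ^ μ) ∂QY.measure) < ⊤ :=
  weighted_quantile_integral_finite_general Y hYpos μ δ hμ hδ hmom FY hFY QY hQY x₁
end

section
/- If F_Y belongs to the maximal domain of attraction of the Gumbel distribution (equivalently, 1−F_Y is rapidly varying so that E[(Y^+)^p] < ∞ for all p > 0), then for the quantile function Q_Y and any λ > 1, lim_{n→∞} [Q_Y(1−k_n/(λ n)) − Q_Y(1−λ k_n/n)] · L(n/k_n) = 2 log λ, where L(1/y) := y/ f_Y(Q_Y(1−y)) is the reciprocal auxiliary function, i.e., f_YQ_Y(1−y) = y L(1/y) with L slowly varying, and k_n → ∞, k_n = o(n). -/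
/-!
In the variable `x = log t`, the function `g x = Q_Y (1 - e^{-x})` has derivative `e^{-h x}` with
`h x = log L (e^x)`, and slow variation of `L` says that `h (x + u) - h x → 0` for every `u`. The
spread is `g (x + log λ) - g (x - log λ)` at `x = log (n / k_n) → ∞`; multiplied by `e^{h x}`, its
derivative in the shift `s` is `exp (-(h (x + s) - h x))`. By the uniform convergence theorem for
slowly varying functions this tends to `1` uniformly for `|s| ≤ log λ`, so the mean value inequality
gives the limit `2 log λ`.
-/

open Set Filter Real MeasureTheory Topology

theorem tendsto_sub_of_tendstoUniformlyOn_deriv {ι E : Type*} [NormedAddCommGroup E]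
    [NormedSpace ℝ E] {l : Filter ι} {Φ Φ' : ι → ℝ → E} {ψ ψ' : ℝ → E} {s : Set ℝ}
    (hs : Convex ℝ s) (hΦ : ∀ᶠ i in l, ∀ x ∈ s, HasDerivWithinAt (Φ i) (Φ' i x) s x)
    (hψ : ∀ x ∈ s, HasDerivWithinAt ψ (ψ' x) s x) (hΦ' : TendstoUniformlyOn Φ' ψ' l s)
    {a b : ℝ} (ha : a ∈ s) (hb : b ∈ s) :
    Tendsto (fun i => Φ i b - Φ i a) l (𝓝 (ψ b - ψ a)) := by
  rw [Metric.tendsto_nhds]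
  intro ε hε
  have hC : 0 < ε / (|b - a| + 1) := by positivity
  filter_upwards [hΦ, Metric.tendstoUniformlyOn_iff.mp hΦ' _ hC] with i hΦi hΦ'i
  have hmvt := hs.norm_image_sub_le_of_norm_hasDerivWithin_le
    (fun x hx => (hΦi x hx).sub (hψ x hx))
    (fun x hx => by rw [← dist_eq_norm, dist_comm]; exact (hΦ'i x hx).le) ha hb
  calc dist (Φ i b - Φ i a) (ψ b - ψ a) = ‖(Φ i b - ψ b) - (Φ i a - ψ a)‖ := by
        rw [dist_eq_norm]; congr 1; abel
    _ ≤ ε / (|b - a| + 1) * |b - a| := hmvt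
    _ < ε := by
        rw [div_mul_eq_mul_div, div_lt_iff₀ (by positivity)]
        nlinarith [abs_nonneg (b - a)]

theorem exists_add_notMem_of_volume_le (t₁ t₂ : Set ℝ) (u : ℝ)
    (h₁ : volume t₁ ≤ ENNReal.ofReal (1 / 2)) (h₂ : volume t₂ ≤ ENNReal.ofReal (1 / 2)) :
    ∃ v ∈ Icc (-1 : ℝ) 1, v + u ∉ t₁ ∧ v ∉ t₂ := by
  by_contra! hcover
  have hsub : Icc (-1 : ℝ) 1 ⊆ (· + u) ⁻¹' t₁ ∪ t₂ := fun v hv => by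
    by_cases hv₁ : v + u ∈ t₁
    · exact Or.inl hv₁
    · exact Or.inr (hcover v hv hv₁)
  have := calc ENNReal.ofReal 2 = volume (Icc (-1 : ℝ) 1) := by norm_num [Real.volume_Icc]
    _ ≤ volume ((· + u) ⁻¹' t₁) + volume t₂ := (measure_mono hsub).trans (measure_union_le _ _)
    _ ≤ ENNReal.ofReal (1 / 2) + ENNReal.ofReal (1 / 2) := by
        rw [measure_preimage_add_right]; exact add_le_add h₁ h₂
    _ = ENNReal.ofReal 1 := by rw [← ENNReal.ofReal_add] <;> norm_num
  exact absurd this (by rw [not_le, ENNReal.ofReal_lt_ofReal_iff] <;> norm_num)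

theorem exists_volume_le_tendstoUniformlyOn_diff {h : ℝ → ℝ} (hmeas : Measurable h)
    (hh : ∀ u, Tendsto (fun x => h (x + u) - h x) atTop (𝓝 0))
    {y : ℕ → ℝ} (hy : Tendsto y atTop atTop) {K : Set ℝ} (hK : MeasurableSet K) (hK' : volume K ≠ ⊤) {δ : ℝ} (hδ : 0 < δ) :
    ∃ t, volume t ≤ ENNReal.ofReal δ ∧
      TendstoUniformlyOn (fun j v => h (y j + v) - h (y j)) (fun _ => 0) atTop (K \ t) := by
  obtain ⟨t, -, -, ht, hunif⟩ := tendstoUniformlyOn_of_ae_tendsto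
    (fun j => ((hmeas.comp (measurable_const_add (y j))).sub measurable_const).stronglyMeasurable)
    stronglyMeasurable_const hK hK' (ae_of_all _ fun v _ => (hh v).comp hy) hδ
  exact ⟨t, ht, hunif⟩

/-- The uniform convergence theorem for slowly varying functions, in additive form. By Egorov, the
convergence is uniform off sets of measure `≤ 1/2` along both `x j` and `x j + u j`; these cannot
cover a translate of `[-1, 1]`, so some `v` is good for both, which bounds
`h (x j + u j) - h (x j)`. -/
theorem tendstoUniformlyOn_sub_of_measurable {h : ℝ → ℝ} (hmeas : Measurable h)
    (hh : ∀ u, Tendsto (fun x => h (x + u) - h x) atTop (𝓝 0)) (a : ℝ) :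
    TendstoUniformlyOn (fun x u => h (x + u) - h x) (fun _ => 0) atTop (Icc (-a) a) := by
  rw [Metric.tendstoUniformlyOn_iff]
  intro ε hε
  by_contra hfreq
  simp only [not_eventually, not_forall, not_lt, exists_prop] at hfreq
  obtain ⟨x, hx, hbad⟩ := exists_seq_forall_of_frequently hfreq
  choose u hu hgap using hbad
  have ha : 0 ≤ a := by linarith [(hu 0).1, (hu 0).2]
  have hz : Tendsto (fun j => x j + u j) atTop atTop :=
    tendsto_atTop_mono (fun j => by linarith [(hu j).1]) (tendsto_atTop_add_const_right _ (-a) hx)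
  have hK : volume (Icc (-(a + 1)) (a + 1)) ≠ ⊤ := measure_Icc_lt_top.ne
  obtain ⟨t₁, ht₁, hunif₁⟩ := exists_volume_le_tendstoUniformlyOn_diff hmeas hh hx
    measurableSet_Icc hK one_half_pos
  obtain ⟨t₂, ht₂, hunif₂⟩ := exists_volume_le_tendstoUniformlyOn_diff hmeas hh hz
    measurableSet_Icc hK one_half_pos
  obtain ⟨j, hj₁, hj₂⟩ := (Metric.tendstoUniformlyOn_iff.mp hunif₁ _ (by positivity : 0 < ε / 4)
    |>.and (Metric.tendstoUniformlyOn_iff.mp hunif₂ _ (by positivity : 0 < ε / 4))).exists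
  obtain ⟨v, hv, hv₁, hv₂⟩ := exists_add_notMem_of_volume_le t₁ t₂ (u j) ht₁ ht₂
  have e₁ := hj₁ (v + u j) ⟨⟨by linarith [hv.1, (hu j).1], by linarith [hv.2, (hu j).2]⟩, hv₁⟩
  have e₂ := hj₂ v ⟨⟨by linarith [hv.1], by linarith [hv.2]⟩, hv₂⟩
  rw [← add_assoc, add_right_comm] at e₁
  simp only [dist_zero_left, Real.norm_eq_abs] at e₁ e₂ hgap
  have := calc ε ≤ |h (x j + u j) - h (x j)| := hgap j
    _ ≤ |h (x j + u j) - h (x j + u j + v)| + |h (x j + u j + v) - h (x j)| := abs_sub_le _ _ _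
    _ < ε / 4 + ε / 4 := by rw [abs_sub_comm] at e₂; exact add_lt_add e₂ e₁
  linarith

theorem tendsto_sub_mul_exp_of_hasDerivAt_exp_neg {g h : ℝ → ℝ}
    (hg : ∀ᶠ x in atTop, HasDerivAt g (exp (-h x)) x)
    (hh : ∀ u, Tendsto (fun x => h (x + u) - h x) atTop (𝓝 0)) (a : ℝ) :
    Tendsto (fun x => (g (x + a) - g (x - a)) * exp (h x)) atTop (𝓝 (2 * a)) := by
  -- `h` need not be measurable, but it agrees eventually with `-log g'`, and derivatives are.
  set h₀ := fun x => -log (deriv g x)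
  have hh₀ : ∀ᶠ x in atTop, h₀ x = h x := hg.mono fun x hx => by simp [h₀, hx.deriv]
  have hh₀_add (u : ℝ) : ∀ᶠ x in atTop, h₀ (x + u) = h (x + u) :=
    (tendsto_atTop_add_const_right _ u tendsto_id).eventually hh₀
  have hsv₀ (u : ℝ) : Tendsto (fun x => h₀ (x + u) - h₀ x) atTop (𝓝 0) :=
    (hh u).congr' (by filter_upwards [hh₀, hh₀_add u] with x hx hxu; rw [hx, hxu])
  have hunif : TendstoUniformlyOn (fun x s => exp (-(h₀ (x + s) - h₀ x))) (fun _ => 1) atTop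
      (Icc (-|a|) |a|) := by
    rw [← tendsto_prod_principal_iff]
    have := (continuous_exp.comp continuous_neg).tendsto 0 |>.comp <| tendsto_prod_principal_iff.mpr
      (tendstoUniformlyOn_sub_of_measurable (measurable_deriv g).log.neg hsv₀ |a|)
    rwa [Function.comp_apply, neg_zero, exp_zero] at this
  obtain ⟨X, hX⟩ := eventually_atTop.mp (hg.and hh₀)
  have hderiv : ∀ᶠ x in atTop, ∀ s ∈ Icc (-|a|) |a|, HasDerivWithinAt
      (fun s => g (x + s) * exp (h₀ x)) (exp (-(h₀ (x + s) - h₀ x))) (Icc (-|a|) |a|) s := by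
    filter_upwards [eventually_ge_atTop (X + |a|)] with x hx s hs
    obtain ⟨hgx, hhx⟩ := hX (x + s) (by linarith [hs.1])
    have := ((hgx.comp s ((hasDerivAt_id s).const_add x)).mul_const (exp (h₀ x)))
    rw [neg_sub, exp_sub, div_eq_mul_inv, ← exp_neg, hhx, mul_comm]
    simpa using this.hasDerivWithinAt
  have := tendsto_sub_of_tendstoUniformlyOn_deriv (convex_Icc _ _) hderiv
    (fun s _ => (hasDerivAt_id s).hasDerivWithinAt) hunif
    (abs_le.mp (abs_neg a).le) (abs_le.mp le_rfl)
  rw [id, id, sub_neg_eq_add, ← two_mul] at this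
  refine this.congr' ?_
  filter_upwards [hh₀] with x hx
  rw [hx, ← sub_mul, sub_eq_add_neg x a]

theorem tendsto_log_comp_exp_add_sub {L : ℝ → ℝ}
    (hSV : ∀ l : ℝ, 0 < l → Tendsto (fun t => L (l * t) / L t) atTop (𝓝 1))
    (hLpos : ∀ᶠ t in atTop, 0 < L t) (u : ℝ) :
    Tendsto (fun x => log (L (exp (x + u))) - log (L (exp x))) atTop (𝓝 0) := by
  have hL : ∀ᶠ x in atTop, 0 < L (exp x) := tendsto_exp_atTop.eventually hLpos
  have hLu : ∀ᶠ x in atTop, 0 < L (exp (x + u)) :=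
    (tendsto_atTop_add_const_right _ u tendsto_id).eventually hL
  have := ((continuousAt_log one_ne_zero).tendsto.comp ((hSV _ (exp_pos u)).comp tendsto_exp_atTop))
  rw [log_one] at this
  refine this.congr' ?_
  filter_upwards [hL, hLu] with x hx hxu
  rw [Function.comp_apply, Function.comp_apply, ← exp_add, add_comm u, log_div hxu.ne' hx.ne']

theorem hasDerivAt_comp_one_sub_exp_neg {Q L : ℝ → ℝ}
    (hQ' : ∀ y ∈ Ioo (0 : ℝ) 1, HasDerivAt Q (1 / (y * L (1 / y))) (1 - y)) {x : ℝ} (hx : 0 < x)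
    (hL : 0 < L (exp x)) :
    HasDerivAt (fun x => Q (1 - exp (-x))) (exp (-log (L (exp x)))) x := by
  have hy : exp (-x) ∈ Ioo (0 : ℝ) 1 := ⟨exp_pos _, exp_lt_one_iff.mpr (neg_lt_zero.mpr hx)⟩
  refine ((hQ' _ hy).comp x ((hasDerivAt_neg x).exp.const_sub 1)).congr_deriv ?_
  rw [one_div (exp (-x)), ← exp_neg, neg_neg, exp_neg (log _), exp_log hL]
  field_simp

theorem tendsto_natCast_div_atTop {k : ℕ → ℝ} (hk : Tendsto k atTop atTop)
    (hkn : Tendsto (fun n : ℕ => k n / n) atTop (𝓝 0)) :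
    Tendsto (fun n : ℕ => (n : ℝ) / k n) atTop atTop := by
  have hpos : ∀ᶠ n : ℕ in atTop, 0 < k n / n := by
    filter_upwards [hk.eventually_gt_atTop 0, eventually_gt_atTop 0] with n hk hn
    positivity
  exact (tendsto_nhdsWithin_iff.mpr ⟨hkn, hpos⟩).inv_tendsto_nhdsGT_zero.congr fun n =>
    inv_div _ _

/-- For `F_Y ∈ MDA(Λ)` with von Mises representation
`f_YQ_Y(1-y) = y L(1/y)`, `L` slowly varying, and `k_n → ∞`, `k_n = o(n)`,
for any `λ > 1`:
`(Q_Y(1 - k_n/(λn)) - Q_Y(1 - λk_n/n)) · L(n/k_n) → 2 log λ`. -/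
theorem gumbel_quantile_spread
    (QY L : ℝ → ℝ)
    (hSV : ∀ l : ℝ, 0 < l → Tendsto (fun t => L (l * t) / L t) atTop (nhds 1))
    (hLpos : ∀ᶠ t in atTop, 0 < L t)
    (hQY' : ∀ y ∈ Ioo (0 : ℝ) 1, HasDerivAt QY (1 / (y * L (1 / y))) (1 - y))
    (k : ℕ → ℝ)
    (hk : Tendsto k atTop atTop)
    (hkn : Tendsto (fun n : ℕ => k n / n) atTop (nhds 0))
    (lam : ℝ) (hlam : 1 < lam) :
    Tendsto
      (fun n : ℕ =>
        (QY (1 - k n / (lam * n)) - QY (1 - lam * k n / n)) * L ((n : ℝ) / k n))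
      atTop (nhds (2 * Real.log lam)) := by
  have hg : ∀ᶠ x in atTop,
      HasDerivAt (fun x => QY (1 - exp (-x))) (exp (-log (L (exp x)))) x := by
    filter_upwards [eventually_gt_atTop 0, tendsto_exp_atTop.eventually hLpos] with x hx hL
    exact hasDerivAt_comp_one_sub_exp_neg hQY' hx hL
  have ht := tendsto_natCast_div_atTop hk hkn
  have hlim := (tendsto_sub_mul_exp_of_hasDerivAt_exp_neg hg
    (tendsto_log_comp_exp_add_sub hSV hLpos) (log lam)).comp (tendsto_log_atTop.comp ht)
  refine hlim.congr' ?_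
  have hlam₀ : 0 < lam := by linarith
  filter_upwards [ht.eventually hLpos, ht.eventually_gt_atTop 0] with n hL hpos
  simp only [Function.comp_apply, exp_log hL, exp_add, exp_sub, exp_neg, exp_log hpos,
    exp_log hlam₀]
  congr 4 <;> field_simp
end
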